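/- arXiv:2107.04519 — 2 statements merged into one kernel-verified Lean document; each statement's English description precedes it below -/
import Mathlib

section
/- Let A be a vector space and let {(F⁻_λ, F⁺_λ) : λ ∈ Λ} be a disjoint family of sections of A (i.e., F⁻_λ ⊆ F⁺_λ ⊆ A for all λ, and for λ ≠ μ either F⁺_λ ⊆ F⁻_μ or F⁺_μ ⊆ F⁻_λ). For each λ choose a subspace W_λ ⊆ A with F⁺_λ = W_λ ⊕ F⁻_λ. Then the subspaces W_λ are independent, i.e., their sum in A is a direct sum ⊕_λ W_λ ⊆ A. -/
/-- In a finite nonempty set, with a "disjointness" total relation, there is a maximal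
element. -/
lemma stmt_3_max {k A : Type*} [Field k] [AddCommGroup A] [Module k A]
    {Λ : Type*} (Fm Fp : Λ → Submodule k A)
    (hsec : ∀ l, Fm l ≤ Fp l)
    (hdisj : ∀ l m, l ≠ m → Fp l ≤ Fm m ∨ Fp m ≤ Fm l) :
    ∀ s : Finset Λ, s.Nonempty → ∃ t ∈ s, ∀ m ∈ s, m ≠ t → Fp m ≤ Fm t := by
  classical
  intro s
  induction s using Finset.induction with
  | empty => intro h; exact absurd rfl h.ne_empty
  | @insert a s ha ih =>
    intro _
    rcases s.eq_empty_or_nonempty with rfl | hne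
    · exact ⟨a, Finset.mem_insert_self a _, fun m hm hma => by
        simp only [Finset.mem_insert, Finset.notMem_empty, or_false] at hm
        exact absurd hm hma⟩
    · obtain ⟨t, ht, hmax⟩ := ih hne
      have hat : a ≠ t := fun h => ha (h ▸ ht)
      rcases hdisj a t hat with h | h
      · refine ⟨t, Finset.mem_insert_of_mem ht, fun m hm hmt => ?_⟩
        rcases Finset.mem_insert.mp hm with rfl | hm
        · exact h
        · exact hmax m hm hmt
      · refine ⟨a, Finset.mem_insert_self a _, fun m hm hma => ?_⟩
        rcases Finset.mem_insert.mp hm with rfl | hm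
        · exact absurd rfl hma
        · by_cases hmt : m = t
          · exact hmt ▸ h
          · exact (hmax m hm hmt).trans ((hsec t).trans h)

lemma stmt_3_key {k A : Type*} [Field k] [AddCommGroup A] [Module k A]
    {Λ : Type*} (Fm Fp : Λ → Submodule k A)
    (hsec : ∀ l, Fm l ≤ Fp l)
    (hdisj : ∀ l m, l ≠ m → Fp l ≤ Fm m ∨ Fp m ≤ Fm l)
    (W : Λ → Submodule k A)
    (hWdisj : ∀ l, W l ⊓ Fm l = ⊥)
    (hWsum : ∀ l, W l ⊔ Fm l = Fp l) :
    ∀ s : Finset Λ, ∀ l ∉ s, ∀ x ∈ W l, x ∈ (⨆ m ∈ (s : Finset Λ), W m) → x = 0 := by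
  classical
  have hWle : ∀ m, W m ≤ Fp m := fun m => (hWsum m) ▸ le_sup_left
  intro s
  induction s using Finset.strongInductionOn with
  | _ s ih =>
    intro l hl x hxW hxS
    rcases s.eq_empty_or_nonempty with rfl | hne
    · simpa using hxS
    · obtain ⟨t, ht, hmax⟩ := stmt_3_max Fm Fp hsec hdisj (insert l s)
        ⟨l, Finset.mem_insert_self _ _⟩
      rcases Finset.mem_insert.mp ht with heq | hts
      · subst heq
        have hle : (⨆ m ∈ (s : Finset Λ), W m) ≤ Fm t := by
          refine iSup₂_le fun m hm => ?_
          have hml : m ≠ t := fun h => hl (h ▸ hm)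
          exact (hWle m).trans (hmax m (Finset.mem_insert_of_mem hm) hml)
        have : x ∈ W t ⊓ Fm t := ⟨hxW, hle hxS⟩
        simpa [hWdisj t] using this
      · -- the maximum t is in s
        have hlt : l ≠ t := fun h => hl (h ▸ hts)
        rw [← Finset.insert_erase hts, Finset.iSup_insert] at hxS
        obtain ⟨w, hw, y, hy, hxy⟩ := Submodule.mem_sup.mp hxS
        have hyF : y ∈ Fm t := by
          have hle : (⨆ m ∈ (s.erase t : Finset Λ), W m) ≤ Fm t := by
            refine iSup₂_le fun m hm => ?_
            have hmt : m ≠ t := (Finset.mem_erase.mp hm).1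
            exact (hWle m).trans
              (hmax m (Finset.mem_insert_of_mem (Finset.mem_of_mem_erase hm)) hmt)
          exact hle hy
        have hxF : x ∈ Fm t :=
          ((hWle l).trans (hmax l (Finset.mem_insert_self _ _) hlt)) hxW
        have hw0 : w ∈ W t ⊓ Fm t := by
          refine ⟨hw, ?_⟩
          have : w = x - y := by rw [← hxy]; abel
          rw [this]; exact sub_mem hxF hyF
        rw [hWdisj t] at hw0
        have hxy' : x = y := by
          rw [← hxy, (Submodule.mem_bot k).mp hw0, zero_add]
        exact ih (s.erase t) (Finset.erase_ssubset hts) l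
          (fun h => hl (Finset.mem_of_mem_erase h)) x hxW (hxy' ▸ hy)

/-- Given a disjoint family of sections `(F⁻_λ, F⁺_λ)` of a vector space `A`
and complements `W_λ` with `F⁺_λ = W_λ ⊕ F⁻_λ`, the family `W_λ` is independent. -/
theorem stmt_3 {k A : Type*} [Field k] [AddCommGroup A] [Module k A]
    {Λ : Type*} (Fm Fp : Λ → Submodule k A)
    (hsec : ∀ l, Fm l ≤ Fp l)
    (hdisj : ∀ l m, l ≠ m → Fp l ≤ Fm m ∨ Fp m ≤ Fm l)
    (W : Λ → Submodule k A)
    (hWdisj : ∀ l, W l ⊓ Fm l = ⊥)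
    (hWsum : ∀ l, W l ⊔ Fm l = Fp l) :
    ∀ l, Disjoint (W l) (⨆ (m) (_ : m ≠ l), W m) := by
  classical
  intro l
  rw [Submodule.disjoint_def]
  intro x hxW hxS
  obtain ⟨s, hs⟩ := Submodule.mem_iSup_iff_exists_finset.mp hxS
  have hle : (⨆ m ∈ s, ⨆ (_ : m ≠ l), W m) ≤ ⨆ m ∈ (s.erase l : Finset Λ), W m := by
    refine iSup₂_le fun m hm => iSup_le fun hml => ?_
    exact le_iSup₂_of_le m (Finset.mem_erase.mpr ⟨hml, hm⟩) le_rfl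
  exact stmt_3_key Fm Fp hsec hdisj W hWdisj hWsum (s.erase l) l
    (Finset.notMem_erase l s) x hxW (hle hs)
end

section
/- Let A be a vector space and let {(F⁻_λ, F⁺_λ) : λ ∈ Λ} be a family of sections of A that is disjoint and covers A (for every proper subspace B ⊊ A there exists λ with B + F⁻_λ ≠ B + F⁺_λ). If for each λ, W_λ is a subspace with F⁺_λ = W_λ ⊕ F⁻_λ, then A = ⊕_{λ ∈ Λ} W_λ. -/
section aux
variable {k A : Type*} [Field k] [AddCommGroup A] [Module k A]
    {Λ : Type*} (Fm Fp : Λ → Submodule k A)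

lemma aux_max (hsec : ∀ l, Fm l ≤ Fp l)
    (hdisj : ∀ l m, l ≠ m → Fp l ≤ Fm m ∨ Fp m ≤ Fm l) :
    ∀ S : Finset Λ, S.Nonempty → ∃ m ∈ S, ∀ m' ∈ S, m' ≠ m → Fp m' ≤ Fm m := by
  classical
  intro S
  induction S using Finset.induction_on with
  | empty => intro h; exact absurd h (by simp)
  | @insert a S ha ih =>
    intro _
    rcases S.eq_empty_or_nonempty with rfl | hS
    · exact ⟨a, by simp, by simp +contextual⟩
    · obtain ⟨m, hm, hmax⟩ := ih hS
      have hne : a ≠ m := fun h => ha (h ▸ hm)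
      rcases hdisj a m hne with h | h
      · refine ⟨m, Finset.mem_insert_of_mem hm, ?_⟩
        intro m' hm' hne'
        rcases Finset.mem_insert.mp hm' with rfl | hm'S
        · exact h
        · exact hmax m' hm'S hne'
      · refine ⟨a, Finset.mem_insert_self a S, ?_⟩
        intro m' hm' hne'
        have hm'S : m' ∈ S := by
          rcases Finset.mem_insert.mp hm' with rfl | h'
          · exact absurd rfl hne'
          · exact h'
        rcases eq_or_ne m' m with rfl | hnm
        · exact h
        · exact (hmax m' hm'S hnm).trans ((hsec m).trans h)

lemma aux_zero (hsec : ∀ l, Fm l ≤ Fp l)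
    (hdisj : ∀ l m, l ≠ m → Fp l ≤ Fm m ∨ Fp m ≤ Fm l)
    (W : Λ → Submodule k A)
    (hWle : ∀ l, W l ≤ Fp l)
    (hWdisj : ∀ l, W l ⊓ Fm l = ⊥) :
    ∀ S : Finset Λ, ∀ w : Λ → A, (∀ m ∈ S, w m ∈ W m) →
      (∑ m ∈ S, w m) = 0 → ∀ m ∈ S, w m = 0 := by
  classical
  intro S
  induction S using Finset.strongInduction with
  | _ S ih =>
    intro w hw hsum m hm
    obtain ⟨m₀, hm₀, hmax⟩ := aux_max Fm Fp hsec hdisj S ⟨m, hm⟩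
    have key : w m₀ = 0 := by
      have h1 : w m₀ = -∑ m' ∈ S.erase m₀, w m' := by
        have h := Finset.add_sum_erase S w hm₀
        rw [hsum] at h
        exact eq_neg_of_add_eq_zero_left h
      have h2 : w m₀ ∈ Fm m₀ := by
        rw [h1]
        refine neg_mem (Submodule.sum_mem _ fun m' hm' => ?_)
        have hne := (Finset.mem_erase.mp hm').1
        exact hmax m' (Finset.mem_erase.mp hm').2 hne (hWle m' (hw m' (Finset.mem_erase.mp hm').2))
      have h3 : w m₀ ∈ W m₀ ⊓ Fm m₀ := ⟨hw m₀ hm₀, h2⟩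
      rw [hWdisj m₀] at h3
      exact h3
    rcases eq_or_ne m m₀ with rfl | hne
    · exact key
    · have hsum' : ∑ m' ∈ S.erase m₀, w m' = 0 := by
        have h := Finset.add_sum_erase S w hm₀
        rw [hsum, key, zero_add] at h
        exact h
      exact ih (S.erase m₀) (Finset.erase_ssubset hm₀) w
        (fun m' hm' => hw m' (Finset.mem_erase.mp hm').2) hsum' m
        (Finset.mem_erase.mpr ⟨hne, hm⟩)

end aux

/-- If a family of sections `(F⁻_λ, F⁺_λ)` of `A` is disjoint and covers `A`,
and `W_λ` satisfies `F⁺_λ = W_λ ⊕ F⁻_λ`, then `A = ⊕_λ W_λ`: the `W_λ` are independent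
and their supremum is all of `A`. -/
theorem stmt_4 {k A : Type*} [Field k] [AddCommGroup A] [Module k A]
    {Λ : Type*} (Fm Fp : Λ → Submodule k A)
    (hsec : ∀ l, Fm l ≤ Fp l)
    (hdisj : ∀ l m, l ≠ m → Fp l ≤ Fm m ∨ Fp m ≤ Fm l)
    (hcov : ∀ B : Submodule k A, B ≠ ⊤ → ∃ l, B ⊔ Fm l ≠ B ⊔ Fp l)
    (W : Λ → Submodule k A)
    (hWdisj : ∀ l, W l ⊓ Fm l = ⊥)
    (hWsum : ∀ l, W l ⊔ Fm l = Fp l) :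
    (∀ l, Disjoint (W l) (⨆ (m) (_ : m ≠ l), W m)) ∧ (⨆ l, W l) = ⊤ := by
  classical
  have hWle : ∀ l, W l ≤ Fp l := fun l => (hWsum l) ▸ le_sup_left
  constructor
  · intro l
    rw [Submodule.disjoint_def]
    intro x hxW hxS
    rw [iSup_subtype'] at hxS
    obtain ⟨f, hf, hfsum⟩ := (Submodule.mem_iSup_iff_exists_finsupp _ _).mp hxS
    set T : Finset Λ := f.support.image Subtype.val with hT
    have hlT : l ∉ T := by
      simp only [hT, Finset.mem_image]
      rintro ⟨i, -, hi⟩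
      exact i.2 hi
    set w : Λ → A := fun m => if h : m = l then -x else f ⟨m, h⟩ with hwdef
    have hwmem : ∀ m ∈ insert l T, w m ∈ W m := by
      intro m hm
      by_cases h : m = l
      · subst h; simpa [hwdef] using neg_mem hxW
      · simpa [hwdef, h] using hf ⟨m, h⟩
    have hwsum : ∑ m ∈ insert l T, w m = 0 := by
      rw [Finset.sum_insert hlT]
      have hT' : ∑ m ∈ T, w m = x := by
        rw [hT, Finset.sum_image (fun a _ b _ h => Subtype.ext h)]
        rw [← hfsum]
        refine Finset.sum_congr rfl fun i hi => ?_
        simp [hwdef, i.2]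
      rw [hT']
      simp [hwdef]
    have := aux_zero Fm Fp hsec hdisj W hWle hWdisj (insert l T) w hwmem hwsum l
      (Finset.mem_insert_self _ _)
    have : -x = 0 := by simpa [hwdef] using this
    exact neg_eq_zero.mp this
  · by_contra h
    obtain ⟨l, hne⟩ := hcov _ h
    apply hne
    refine le_antisymm (sup_le_sup_left (hsec l) _) ?_
    have h1 : Fp l ≤ (⨆ l, W l) ⊔ Fm l := by
      rw [← hWsum l]
      exact sup_le ((le_iSup W l).trans le_sup_left) le_sup_right
    exact sup_le le_sup_left h1
end
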